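/- arXiv:1905.02600 — 3 statements merged into one kernel-verified Lean document; each statement's English description precedes it below -/
import Mathlib

section
/- (Hakimi's Theorem) A graph $G$ decomposes into $k$ pseudoforests if and only if the maximum average degree of $G$ is at most $2k$. -/
open SimpleGraph

/-- A pseudoforest: every connected component contains at most one cycle,
i.e. any two cycles lying in the same connected component have the same edge set. -/
def IsPseudoforest {V : Type*} (G : SimpleGraph V) : Prop :=
  ∀ ⦃u w : V⦄ (p : G.Walk u u) (q : G.Walk w w),
    p.IsCycle → q.IsCycle → G.Reachable u w →
      ∀ e : Sym2 V, e ∈ p.edges ↔ e ∈ q.edges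

/-- A decomposition of `G`: edge-disjoint subgraphs whose edge sets partition `E(G)`. -/
def IsDecomposition {V : Type*} (G : SimpleGraph V) {n : ℕ}
    (H : Fin n → SimpleGraph V) : Prop :=
  (∀ i, H i ≤ G) ∧
    (Pairwise fun i j => Disjoint (H i).edgeSet (H j).edgeSet) ∧
    (⋃ i, (H i).edgeSet) = G.edgeSet

/-- `MadLE G x` says the maximum average degree of `G` is at most `x`:
every nonempty subgraph `H` satisfies `2 e(H) ≤ x v(H)`. -/
def MadLE {V : Type*} [Fintype V] (G : SimpleGraph V) (x : ℚ) : Prop :=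
  ∀ H : G.Subgraph, H.verts.Nonempty →
    2 * (H.edgeSet.ncard : ℚ) ≤ x * (H.verts.ncard : ℚ)

/-!
A connected finite graph is a pseudoforest exactly when it has at most as many edges as vertices:
a spanning tree has one edge fewer than there are vertices, and deleting an edge that lies on a
cycle keeps the graph connected. Summing over components, every finite pseudoforest has at most as
many edges as vertices, so each of `k` pseudoforests meets a subgraph `H` in at most `v(H)` edges
and `e(H) ≤ k v(H)`. Conversely, that inequality is exactly Hall's condition for
assigning to every edge, injectively, a pair (one of its endpoints, a colour in `Fin k`). In each
colour class the edges are then mapped injectively to their endpoints, so every component has at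
most as many edges as vertices and the class is a pseudoforest.
-/

section

open Function

variable {V W : Type*} {G : SimpleGraph V}

namespace SimpleGraph

theorem Walk.map_edges_induce {s : Set V} {u v : V} (p : G.Walk u v)
    (hp : ∀ x ∈ p.support, x ∈ s) :
    (p.induce s hp).edges.map (Sym2.map (↑)) = p.edges := by
  induction p with
  | nil => rfl
  | cons h p ih => simp [ih]

theorem Walk.IsCycle.induce {s : Set V} {u : V} {p : G.Walk u u} (hp : p.IsCycle)
    (hs : ∀ x ∈ p.support, x ∈ s) : (p.induce s hs).IsCycle := by
  refine (Walk.isCycle_map_iff_of_injective (f := (Embedding.induce (G := G) s).toHom)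
    (Embedding.induce (G := G) s).injective).1 ?_
  rwa [Walk.map_induce]

theorem Walk.IsCycle.exists_mem_edges {u : V} {p : G.Walk u u} (hp : p.IsCycle) :
    ∃ e, e ∈ p.edges :=
  List.exists_mem_of_ne_nil _ (Walk.edges_eq_nil.not.2 hp.not_nil)

theorem card_edgeSet_deleteEdges_singleton_add_one [Finite V] {e : Sym2 V}
    (he : e ∈ G.edgeSet) :
    Nat.card (G.deleteEdges {e}).edgeSet + 1 = Nat.card G.edgeSet := by
  rw [edgeSet_deleteEdges, Nat.card_coe_set_eq, Nat.card_coe_set_eq]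
  exact Set.ncard_sdiff_singleton_add_one he

theorem Connected.connected_deleteEdges_of_isCycle (hG : G.Connected) {u : V} {p : G.Walk u u}
    (hp : p.IsCycle) {e : Sym2 V} (he : e ∈ p.edges) : (G.deleteEdges {e}).Connected := by
  induction e using Sym2.ind with
  | _ x y =>
    exact hG.connected_delete_edge_of_not_isBridge fun hb => hb.notMem_edges_of_isCycle hp he

theorem Connected.card_le_card_edgeSet_of_isCycle [Finite V] (hG : G.Connected) {u : V}
    {p : G.Walk u u} (hp : p.IsCycle) : Nat.card V ≤ Nat.card G.edgeSet := by
  obtain ⟨e, he⟩ := hp.exists_mem_edges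
  have := (hG.connected_deleteEdges_of_isCycle hp he).card_vert_le_card_edgeSet_add_one
  rwa [card_edgeSet_deleteEdges_singleton_add_one (p.edges_subset_edgeSet he)] at this

theorem ConnectedComponent.sum_card [Finite V] [Fintype G.ConnectedComponent] :
    ∑ C : G.ConnectedComponent, Nat.card C = Nat.card V := by
  rw [← Nat.card_sigma]
  exact Nat.card_congr (Equiv.sigmaFiberEquiv G.connectedComponentMk)

theorem ConnectedComponent.sum_card_edgeSet_toSimpleGraph [Finite V]
    [Fintype G.ConnectedComponent] :
    ∑ C : G.ConnectedComponent, Nat.card C.toSimpleGraph.edgeSet = Nat.card G.edgeSet := by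
  rw [← Nat.card_sigma]
  refine Nat.card_eq_of_bijective (fun e => e.1.toSimpleGraph_hom.mapEdgeSet e.2) ⟨?_, ?_⟩
  · rintro ⟨C, e⟩ ⟨D, e'⟩ h
    have h' : Sym2.map Subtype.val (e : Sym2 C) = Sym2.map Subtype.val (e' : Sym2 D) :=
      congrArg Subtype.val h
    obtain ⟨⟨x, hxC⟩, hxe⟩ : ∃ x, x ∈ (e : Sym2 C) := ⟨_, Sym2.out_fst_mem _⟩
    obtain ⟨y, -, hy⟩ := Sym2.mem_map.1 (h' ▸ Sym2.mem_map.2 ⟨_, hxe, rfl⟩)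
    obtain rfl := ConnectedComponent.eq_of_common_vertex hxC (hy ▸ y.2)
    rw [show e = e' from Hom.mapEdgeSet.injective _ Subtype.val_injective h]
  · rintro ⟨e, he⟩
    induction e using Sym2.ind with
    | _ x y =>
      set C := G.connectedComponentMk x
      exact ⟨⟨C, ⟨s(⟨x, rfl⟩, ⟨y, (C.mem_supp_congr_adj he).1 rfl⟩), he⟩⟩, rfl⟩

theorem EdgeLabeling.mem_edgeSet_labelGraph {K : Type*} {C : G.EdgeLabeling K} {k : K}
    {e : Sym2 V} :
    e ∈ (C.labelGraph k).edgeSet ↔ ∃ h : e ∈ G.edgeSet, C ⟨e, h⟩ = k := by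
  rw [EdgeLabeling.labelGraph, edgeSet_fromEdgeSet, Set.mem_sdiff, Set.mem_ofPred_eq]
  exact ⟨fun h => h.1, fun h => ⟨h, G.not_isDiag_of_mem_edgeSet h.1⟩⟩

end SimpleGraph

theorem isPseudoforest_of_edges_subset
    (h : ∀ ⦃u w : V⦄ (p : G.Walk u u) (q : G.Walk w w), p.IsCycle → q.IsCycle →
      G.Reachable u w → ∀ e ∈ p.edges, e ∈ q.edges) :
    IsPseudoforest G :=
  fun _ _ p q hp hq huw _ => ⟨h p q hp hq huw _, h q p hq hp huw.symm _⟩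

theorem IsPseudoforest.comap {G' : SimpleGraph W} (f : G →g G') (hf : Injective f)
    (h : IsPseudoforest G') : IsPseudoforest G := by
  intro u w p q hp hq huw e
  have := h (p.map f) (q.map f) (hp.map hf) (hq.map hf) (huw.map f) (e.map f)
  rwa [Walk.edges_map, Walk.edges_map, List.mem_map_of_injective (Sym2.map.injective hf),
    List.mem_map_of_injective (Sym2.map.injective hf)] at this

theorem isPseudoforest_of_forall_connectedComponent
    (h : ∀ C : G.ConnectedComponent, IsPseudoforest C.toSimpleGraph) : IsPseudoforest G := by
  classical
  refine isPseudoforest_of_edges_subset fun u w p q hp hq huw e he => ?_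
  set C := G.connectedComponentMk u
  have hpC : ∀ x ∈ p.support, x ∈ C.supp := fun x hx =>
    ConnectedComponent.sound ⟨(p.takeUntil x hx).reverse⟩
  have hqC : ∀ x ∈ q.support, x ∈ C.supp := fun x hx =>
    ConnectedComponent.sound (huw.trans ⟨q.takeUntil x hx⟩).symm
  rw [← p.map_edges_induce hpC, List.mem_map] at he
  obtain ⟨e', he', rfl⟩ := he
  rw [← q.map_edges_induce hqC]
  exact List.mem_map_of_mem ((h C _ _ (hp.induce hpC) (hq.induce hqC)
    (C.connected_toSimpleGraph.preconnected _ _) e').1 he')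

namespace SimpleGraph

theorem Connected.isPseudoforest_of_card_edgeSet_le [Finite V] (hG : G.Connected)
    (h : Nat.card G.edgeSet ≤ Nat.card V) : IsPseudoforest G := by
  refine isPseudoforest_of_edges_subset fun u w p q hp hq _ e he => ?_
  by_contra heq
  have hq' := hq.transfer (H := G.deleteEdges {e}) fun e' he' => by
    rw [edgeSet_deleteEdges]
    exact ⟨q.edges_subset_edgeSet he', fun h => heq (Set.mem_singleton_iff.1 h ▸ he')⟩
  have h₁ := (hG.connected_deleteEdges_of_isCycle hp he).card_le_card_edgeSet_of_isCycle hq'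
  have h₂ := card_edgeSet_deleteEdges_singleton_add_one (p.edges_subset_edgeSet he)
  omega

theorem Connected.card_edgeSet_le_of_isPseudoforest [Finite V] (hG : G.Connected)
    (hP : IsPseudoforest G) : Nat.card G.edgeSet ≤ Nat.card V := by
  by_cases hacyc : G.IsAcyclic
  · have := (isTree_iff_connected_and_card.1 ⟨hG, hacyc⟩).2
    omega
  obtain ⟨u, c, hc⟩ : ∃ (u : V) (c : G.Walk u u), c.IsCycle := by
    simpa [IsAcyclic] using hacyc
  obtain ⟨e, he⟩ := hc.exists_mem_edges
  have hacyc' : (G.deleteEdges {e}).IsAcyclic := by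
    intro w d hd
    have := (hP c (d.mapLe (deleteEdges_le _)) hc (hd.mapLe _) (hG.preconnected u w) e).1 he
    rw [Walk.edges_mapLe_eq_edges] at this
    simpa using d.edges_subset_edgeSet this
  have h₁ := (isTree_iff_connected_and_card.1
    ⟨hG.connected_deleteEdges_of_isCycle hc he, hacyc'⟩).2
  have h₂ := card_edgeSet_deleteEdges_singleton_add_one (c.edges_subset_edgeSet he)
  omega

end SimpleGraph

theorem IsPseudoforest.card_edgeSet_le [Finite V] (hP : IsPseudoforest G) :
    Nat.card G.edgeSet ≤ Nat.card V := by
  have := Fintype.ofFinite G.ConnectedComponent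
  rw [← ConnectedComponent.sum_card_edgeSet_toSimpleGraph,
    ← ConnectedComponent.sum_card (G := G)]
  exact Finset.sum_le_sum fun C _ => C.connected_toSimpleGraph.card_edgeSet_le_of_isPseudoforest
    (hP.comap C.toSimpleGraph_hom Subtype.val_injective)

theorem IsPseudoforest.ncard_edgeSet_le [Finite V] (hP : IsPseudoforest G) {s : Set V}
    (hs : G.support ⊆ s) : G.edgeSet.ncard ≤ s.ncard := by
  have hcard := (hP.comap (Embedding.induce (G := G) s).toHom
    (Embedding.induce (G := G) s).injective).card_edgeSet_le
  rw [Nat.card_coe_set_eq] at hcard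
  refine le_trans ?_ hcard
  rw [← Nat.card_coe_set_eq]
  refine Nat.card_le_card_of_surjective (Embedding.induce s).toHom.mapEdgeSet ?_
  rintro ⟨e, he⟩
  induction e using Sym2.ind with
  | _ x y =>
    have hx : x ∈ s := hs ((mem_support G).2 ⟨y, he⟩)
    have hy : y ∈ s := hs ((mem_support G).2 ⟨x, he.symm⟩)
    exact ⟨⟨s(⟨x, hx⟩, ⟨y, hy⟩), he⟩, rfl⟩

theorem card_edgeSet_le_of_injective_endpoint [Finite W] {G' : SimpleGraph W} (φ : G' →g G)
    (hφ : Injective φ) (f : G.edgeSet → V) (hf : Injective f)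
    (hfe : ∀ e : G.edgeSet, f e ∈ (e : Sym2 V)) : Nat.card G'.edgeSet ≤ Nat.card W := by
  rw [← Nat.card_range_of_injective hφ]
  refine Nat.card_le_card_of_injective (fun e => ⟨f (φ.mapEdgeSet e), ?_⟩) fun e e' h =>
    Hom.mapEdgeSet.injective φ hφ (hf (congrArg Subtype.val h))
  obtain ⟨x, -, hx⟩ := Sym2.mem_map.1 (hfe (φ.mapEdgeSet e))
  exact ⟨x, hx⟩

theorem isPseudoforest_of_injective_endpoint [Finite V] (f : G.edgeSet → V) (hf : Injective f)
    (hfe : ∀ e : G.edgeSet, f e ∈ (e : Sym2 V)) : IsPseudoforest G :=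
  isPseudoforest_of_forall_connectedComponent fun C =>
    C.connected_toSimpleGraph.isPseudoforest_of_card_edgeSet_le
      (card_edgeSet_le_of_injective_endpoint C.toSimpleGraph_hom Subtype.val_injective f hf hfe)

open Finset in
theorem madLE_of_isDecomposition [Fintype V] {k : ℕ} {H : Fin k → SimpleGraph V}
    (hH : IsDecomposition G H) (hP : ∀ i, IsPseudoforest (H i)) : MadLE G (2 * k) := by
  intro S _
  have hcover : S.edgeSet = ⋃ i, S.edgeSet ∩ (H i).edgeSet := by
    rw [← Set.inter_iUnion, hH.2.2, Set.inter_eq_left.2 S.edgeSet_subset]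
  have hpart : ∀ i, (S.edgeSet ∩ (H i).edgeSet).ncard ≤ S.verts.ncard := fun i => by
    rw [← Subgraph.edgeSet_spanningCoe, ← edgeSet_inf]
    exact ((hP i).comap (Hom.ofLE inf_le_right) injective_id).ncard_edgeSet_le
      fun v ⟨_, hvw⟩ => S.edge_vert hvw.1
  have hcount : S.edgeSet.ncard ≤ k * S.verts.ncard := calc
    S.edgeSet.ncard = (⋃ i, S.edgeSet ∩ (H i).edgeSet).ncard := by rw [← hcover]
    _ ≤ ∑ i, (S.edgeSet ∩ (H i).edgeSet).ncard := Set.ncard_iUnion_le_of_fintype _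
    _ ≤ ∑ _i : Fin k, S.verts.ncard := sum_le_sum fun i _ => hpart i
    _ = k * S.verts.ncard := by simp
  have : (S.edgeSet.ncard : ℚ) ≤ k * S.verts.ncard := by exact_mod_cast hcount
  linarith

open Finset in
theorem MadLE.card_le_mul_card_biUnion_toFinset [Fintype V] [DecidableEq V] {k : ℕ}
    (h : MadLE G (2 * k)) {F : Finset (Sym2 V)} (hF : ↑F ⊆ G.edgeSet) :
    #F ≤ k * #(F.biUnion Sym2.toFinset) := by
  let S : G.Subgraph :=
    { verts := ↑(F.biUnion Sym2.toFinset)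
      Adj := fun x y => s(x, y) ∈ F
      adj_sub := fun hxy => hF hxy
      edge_vert := fun hxy => by simpa using ⟨_, hxy, Sym2.mem_mk_left _ _⟩
      symm := ⟨fun x y hxy => by rwa [Sym2.eq_swap]⟩ }
  have hS : S.edgeSet = ↑F := by
    ext e
    induction e using Sym2.ind with
    | _ x y => rfl
  rcases F.eq_empty_or_nonempty with rfl | ⟨e, he⟩
  · simp
  have hne : S.verts.Nonempty :=
    ⟨e.out.1, mem_coe.2 (mem_biUnion.2 ⟨e, he, Sym2.mem_toFinset.2 (Sym2.out_fst_mem e)⟩)⟩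
  have := h S hne
  rw [hS, Set.ncard_coe_finset, show S.verts = ↑(F.biUnion Sym2.toFinset) from rfl,
    Set.ncard_coe_finset] at this
  have : (#F : ℚ) ≤ k * #(F.biUnion Sym2.toFinset) := by linarith
  exact_mod_cast this

open Finset in
theorem MadLE.exists_injective_endpoint [Fintype V] {k : ℕ} (h : MadLE G (2 * k)) :
    ∃ f : G.edgeSet → V × Fin k,
      Injective f ∧ ∀ e : G.edgeSet, (f e).1 ∈ (e : Sym2 V) := by
  classical
  obtain ⟨f, hf, hfe⟩ := (all_card_le_biUnion_card_iff_exists_injective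
    fun e : G.edgeSet => (e : Sym2 V).toFinset ×ˢ (univ : Finset (Fin k))).1 fun s => by
      have hs : s.biUnion (fun e : G.edgeSet => (e : Sym2 V).toFinset ×ˢ univ) =
          (s.map (Embedding.subtype _)).biUnion Sym2.toFinset ×ˢ (univ : Finset (Fin k)) := by
        ext
        simp
      rw [hs, card_product, card_univ, Fintype.card_fin, mul_comm,
        ← card_map (Embedding.subtype _)]
      exact h.card_le_mul_card_biUnion_toFinset (by simp)
  exact ⟨f, hf, fun e => Sym2.mem_toFinset.1 (mem_product.1 (hfe e)).1⟩

theorem isDecomposition_labelGraph {n : ℕ} (C : G.EdgeLabeling (Fin n)) :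
    IsDecomposition G C.labelGraph :=
  ⟨fun _ => C.labelGraph_le, fun _ _ hij =>
    disjoint_edgeSet.2 (EdgeLabeling.pairwise_disjoint_labelGraph hij),
    by rw [← edgeSet_iSup, C.iSup_labelGraph]⟩

theorem isPseudoforest_labelGraph [Finite V] {K : Type*} (f : G.edgeSet → V × K)
    (hf : Injective f) (hfe : ∀ e : G.edgeSet, (f e).1 ∈ (e : Sym2 V)) (k : K) :
    IsPseudoforest (EdgeLabeling.labelGraph (fun e => (f e).2 : G.EdgeLabeling K) k) := by
  have hmem (e : (EdgeLabeling.labelGraph (fun e => (f e).2 : G.EdgeLabeling K) k).edgeSet) :=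
    EdgeLabeling.mem_edgeSet_labelGraph.1 e.2
  refine isPseudoforest_of_injective_endpoint (fun e => (f ⟨e, (hmem e).1⟩).1)
    (fun e e' hee => ?_) fun e => hfe _
  have := hf (Prod.ext hee ((hmem e).2.trans (hmem e').2.symm))
  exact Subtype.ext (congrArg Subtype.val this :)

end

/-- Hakimi's Theorem: `G` decomposes into `k` pseudoforests if and only if the
maximum average degree of `G` is at most `2k`. -/
theorem hakimi (k : ℕ) {V : Type*} [Fintype V] (G : SimpleGraph V) :
    (∃ H : Fin k → SimpleGraph V,
        IsDecomposition G H ∧ ∀ i, IsPseudoforest (H i)) ↔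
      MadLE G (2 * (k : ℚ)) := by
  refine ⟨fun ⟨H, hH, hP⟩ => madLE_of_isDecomposition hH hP, fun h => ?_⟩
  obtain ⟨f, hf, hfe⟩ := h.exists_injective_endpoint
  exact ⟨_, isDecomposition_labelGraph (fun e => (f e).2), isPseudoforest_labelGraph f hf hfe⟩
end

section
/- A graph $G$ admits a decomposition into $k$ pseudoforests if and only if $G$ admits an orientation of its edges in which every vertex has outdegree at most $k$. -/
open SimpleGraph

/-- `o` is an orientation of `G`: each edge of `G` is replaced by exactly one arc. -/
def IsOrientation {V : Type*} (G : SimpleGraph V) (o : V → V → Prop) : Prop :=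
  (∀ u v, o u v → G.Adj u v) ∧ ∀ u v, G.Adj u v → (o u v ↔ ¬ o v u)

/-- The outdegree of `v` in the directed graph `o`. -/
noncomputable def outDeg {V : Type*} (o : V → V → Prop) (v : V) : ℕ :=
  {u | o v u}.ncard

/-!
A graph with an orientation of out-degree at most one lies inside the functional graph of the map
`σ` sending each vertex along its out-arc. A cycle of a functional graph has as many vertices as
edges, and each of its edges is `s(x, σ x)` for one of its vertices `x`; hence it is closed under
`σ` and its vertices are `σ`-periodic. The vertices from which some iterate of `σ` reaches a given
cycle form a union of components, so every other cycle of that component lies on the given one.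

Conversely, a spanning forest `T` of a pseudoforest misses at most one edge per component, since
each missing edge closes a cycle with the path of `T` between its endpoints. Orienting `T` towards
a root placed at an endpoint of that edge, and the edge away from the root, gives out-degree at
most one. For `k` pseudoforests these orientations are superposed; in the other direction the
out-arcs of each vertex are labelled injectively by `Fin k`, and each label class is a
pseudoforest.
-/

namespace SimpleGraph

variable {V : Type*}

def functionalGraph (σ : V → V) : SimpleGraph V :=
  fromRel fun x y => σ x = y

@[simp]
theorem functionalGraph_adj {σ : V → V} {x y : V} :
    (functionalGraph σ).Adj x y ↔ x ≠ y ∧ (σ x = y ∨ σ y = x) :=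
  fromRel_adj _ _ _

theorem Walk.IsCycle.card_support_toFinset [DecidableEq V] {G : SimpleGraph V} {u : V}
    {c : G.Walk u u} (hc : c.IsCycle) : c.support.toFinset.card = c.length := by
  have hu : u ∈ c.support.tail := c.end_mem_tail_support hc.not_nil
  have hlen := c.length_support
  rw [← c.cons_tail_support, List.length_cons] at hlen
  rw [← c.cons_tail_support, List.toFinset_cons, Finset.insert_eq_of_mem (List.mem_toFinset.2 hu),
    List.toFinset_card_of_nodup hc.support_nodup]
  omega

namespace functionalGraph

variable {σ : V → V} {u : V} {c : (functionalGraph σ).Walk u u}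

theorem edges_toFinset_eq_image [DecidableEq V] (hc : c.IsCycle) :
    c.edges.toFinset = c.support.toFinset.image fun x => s(x, σ x) := by
  refine Finset.eq_of_subset_of_card_le (fun e he => ?_) ?_
  · rw [List.mem_toFinset] at he
    induction e using Sym2.ind with
    | _ a b =>
      rw [Finset.mem_image]
      rcases (functionalGraph_adj.1 (c.adj_of_mem_edges he)).2 with rfl | rfl
      · exact ⟨a, List.mem_toFinset.2 (c.fst_mem_support_of_mem_edges he), rfl⟩
      · exact ⟨b, List.mem_toFinset.2 (c.snd_mem_support_of_mem_edges he), Sym2.eq_swap⟩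
  · rw [List.toFinset_card_of_nodup hc.edges_nodup, c.length_edges, ← hc.card_support_toFinset]
    exact Finset.card_image_le

theorem mem_edges_iff (hc : c.IsCycle) {e : Sym2 V} :
    e ∈ c.edges ↔ ∃ x ∈ c.support, s(x, σ x) = e := by
  classical
  simpa using Finset.ext_iff.1 (edges_toFinset_eq_image hc) e

theorem mapsTo_support (hc : c.IsCycle) :
    Set.MapsTo σ {x | x ∈ c.support} {x | x ∈ c.support} := fun x hx =>
  c.snd_mem_support_of_mem_edges ((mem_edges_iff hc).2 ⟨x, hx, rfl⟩)

theorem surjOn_support (hc : c.IsCycle) :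
    Set.SurjOn σ {x | x ∈ c.support} {x | x ∈ c.support} := by
  intro x hx
  obtain ⟨a, b, hab, hnbr⟩ := Set.ncard_eq_two.1 (hc.ncard_neighborSet_toSubgraph_eq_two hx)
  have hin : ∀ y ∈ ({a, b} : Set V), ∃ z ∈ c.support, s(z, σ z) = s(x, y) := fun y hy =>
    (mem_edges_iff hc).1 (Walk.adj_toSubgraph_iff_mem_edges.1 (hnbr ▸ hy :))
  obtain ⟨z, hz, hza⟩ := hin a (by simp)
  obtain ⟨w, hw, hwb⟩ := hin b (by simp)
  rcases Sym2.eq_iff.1 hza with ⟨rfl, rfl⟩ | ⟨rfl, h⟩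
  · rcases Sym2.eq_iff.1 hwb with ⟨rfl, rfl⟩ | ⟨rfl, h⟩
    · exact absurd rfl hab
    · exact ⟨w, hw, h⟩
  · exact ⟨z, hz, h⟩

theorem mem_periodicPts_of_mem_support (hc : c.IsCycle) {x : V} (hx : x ∈ c.support) :
    x ∈ Function.periodicPts σ := by
  have hfin : {x | x ∈ c.support}.Finite := c.support.finite_toSet
  have hbij := (hfin.surjOn_iff_bijOn_of_mapsTo (mapsTo_support hc)).1 (surjOn_support hc)
  have : Finite {x | x ∈ c.support} := hfin.to_subtype
  obtain ⟨n, hn, hper⟩ := ((mapsTo_support hc).restrict_inj.2 hbij.injOn).mem_periodicPts ⟨x, hx⟩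
  exact ⟨n, hn, hper.map (g := Subtype.val) fun _ => rfl⟩

theorem exists_iterate_mem_of_reachable {A : Set V} (hA : Set.MapsTo σ A A) {x y : V}
    (hxy : (functionalGraph σ).Reachable x y) (hx : ∃ n, σ^[n] x ∈ A) :
    ∃ n, σ^[n] y ∈ A := by
  obtain ⟨w⟩ := hxy
  induction w with
  | nil => exact hx
  | @cons x z y h _ ih =>
    refine ih ?_
    obtain ⟨n, hn⟩ := hx
    rcases (functionalGraph_adj.1 h).2 with rfl | rfl
    · exact ⟨n, by rw [← Function.iterate_succ_apply, Function.iterate_succ_apply']; exact hA hn⟩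
    · exact ⟨n + 1, by rwa [Function.iterate_succ_apply]⟩

theorem support_subset_of_reachable {w : V} {d : (functionalGraph σ).Walk w w}
    (hc : c.IsCycle) (hd : d.IsCycle) (hreach : (functionalGraph σ).Reachable u w) {x : V}
    (hx : x ∈ d.support) : x ∈ c.support := by
  classical
  obtain ⟨n, hn⟩ := exists_iterate_mem_of_reachable (mapsTo_support hc)
    (hreach.trans (d.takeUntil x hx).reachable) ⟨0, c.start_mem_support⟩
  obtain ⟨m, hm, hper⟩ := mem_periodicPts_of_mem_support hd hx
  have hle : n ≤ m * n := Nat.le_mul_of_pos_left n hm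
  rw [← (hper.mul_const n).eq, ← Nat.sub_add_cancel hle, Function.iterate_add_apply]
  exact (mapsTo_support hc).iterate _ hn

end functionalGraph

theorem isPseudoforest_functionalGraph (σ : V → V) : IsPseudoforest (functionalGraph σ) := by
  intro u w c d hc hd hreach e
  rw [functionalGraph.mem_edges_iff hc, functionalGraph.mem_edges_iff hd]
  have hsupp : ∀ x, x ∈ c.support ↔ x ∈ d.support := fun x =>
    ⟨functionalGraph.support_subset_of_reachable hd hc hreach.symm,
      functionalGraph.support_subset_of_reachable hc hd hreach⟩
  simp only [hsupp]

theorem IsAcyclic.mem_support_iff_notMem_support {T : SimpleGraph V} (hT : T.IsAcyclic)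
    {r u v : V} {p : T.Walk r u} {q : T.Walk r v} (hp : p.IsPath) (hq : q.IsPath)
    (hadj : T.Adj u v) : v ∈ p.support ↔ u ∉ q.support :=
  ⟨hT.ne_mem_support_of_support_of_adj_of_isPath hp hq hadj,
    hT.mem_support_of_ne_mem_support_of_adj_of_isPath hp hq hadj⟩

theorem IsAcyclic.exists_orientation {T : SimpleGraph V} (hT : T.IsAcyclic) (root : V → V)
    (hreach : ∀ u, T.Reachable (root u) u) (hroot : ∀ u v, T.Reachable u v → root u = root v) :
    ∃ o, IsOrientation T o ∧ (∀ u, {v | o u v}.Subsingleton) ∧ ∀ u v, u = root u → ¬ o u v := by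
  let o u v := T.Adj u v ∧ ∀ p : T.Walk (root u) u, p.IsPath → v ∈ p.support
  have ho : ∀ {u v} (p : T.Walk (root u) u), p.IsPath → (o u v ↔ T.Adj u v ∧ v ∈ p.support) :=
    fun p hp => and_congr_right fun _ =>
      ⟨fun h => h p hp, fun h p' hp' =>
        Subtype.mk.inj ((hT.subsingleton_path _ _).elim ⟨p, hp⟩ ⟨p', hp'⟩) ▸ h⟩
  refine ⟨o, ⟨fun u v h => h.1, fun u v hadj => ?_⟩, fun u v hv w hw => ?_, fun u v hu h => ?_⟩
  · obtain ⟨p, hp⟩ := (hreach u).exists_isPath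
    obtain ⟨q, hq⟩ := (hreach v).exists_isPath
    have hr : root v = root u := (hroot u v hadj.reachable).symm
    rw [ho p hp, ho q hq, and_iff_right hadj, and_iff_right hadj.symm]
    simpa using hT.mem_support_iff_notMem_support hp ((Walk.isPath_copy q hr rfl).2 hq) hadj
  · obtain ⟨p, hp⟩ := (hreach u).exists_isPath
    rw [Set.mem_ofPred_eq, ho p hp] at hv hw
    exact (hT.eq_penultimate_of_adj_end hp hv.1 hv.2).trans
      (hT.eq_penultimate_of_adj_end hp hw.1 hw.2).symm
  · obtain ⟨p, hp⟩ := (hreach u).exists_isPath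
    rw [ho p hp] at h
    have hnil : (p.copy hu.symm rfl).Nil := Walk.isPath_iff_nil.1 ((Walk.isPath_copy _ _ _).2 hp)
    have hv : v ∈ (p.copy hu.symm rfl).support := by simpa using h.2
    rw [Walk.nil_iff_support_eq.1 hnil, List.mem_singleton] at hv
    exact T.loopless.irrefl _ (hv ▸ h.1)

theorem exists_isCycle_of_not_adj {T H : SimpleGraph V} (hTH : T ≤ H) {a b : V}
    (hab : H.Adj a b) (hTab : ¬ T.Adj a b) (hreach : T.Reachable b a) :
    ∃ c : H.Walk a a, c.IsCycle ∧ s(a, b) ∈ c.edges ∧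
      ∀ e ∈ c.edges, e ∈ T.edgeSet ∨ e = s(a, b) := by
  obtain ⟨p, hp⟩ := hreach.exists_isPath
  have hpT : ∀ e ∈ (p.mapLe hTH).edges, e ∈ T.edgeSet := by
    simpa only [Walk.edges_mapLe_eq_edges] using p.edges_subset_edgeSet
  refine ⟨.cons hab (p.mapLe hTH), (Walk.cons_isCycle_iff _ hab).2 ⟨hp.mapLe hTH,
    fun h => hTab (hpT _ h)⟩, by simp, fun e he => ?_⟩
  rcases List.mem_cons.1 (Walk.edges_cons hab _ ▸ he) with rfl | he
  · exact Or.inr rfl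
  · exact Or.inl (hpT e he)

end SimpleGraph

section

variable {V : Type*}

theorem IsPseudoforest.anti {G H : SimpleGraph V} (hGH : G ≤ H) (hH : IsPseudoforest H) :
    IsPseudoforest G := by
  intro u w c d hc hd hreach e
  simpa using hH (c.mapLe hGH) (d.mapLe hGH) (hc.mapLe hGH) (hd.mapLe hGH) (hreach.mono hGH) e

theorem IsOrientation.asymm {G : SimpleGraph V} {o : V → V → Prop} (ho : IsOrientation G o)
    {u v : V} (h : o u v) : ¬ o v u :=
  (ho.2 u v (ho.1 u v h)).1 h

theorem IsOrientation.or_of_adj {G : SimpleGraph V} {o : V → V → Prop} (ho : IsOrientation G o)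
    {u v : V} (huv : G.Adj u v) : o u v ∨ o v u :=
  or_iff_not_imp_right.2 (ho.2 u v huv).2

theorem IsOrientation.isPseudoforest {H : SimpleGraph V} {o : V → V → Prop}
    (ho : IsOrientation H o) (hsub : ∀ u, {v | o u v}.Subsingleton) : IsPseudoforest H := by
  have hσ : ∀ u, ∃ w, ∀ v, o u v → w = v := fun u => by
    by_cases h : ∃ v, o u v
    · obtain ⟨v, hv⟩ := h
      exact ⟨v, fun w hw => hsub u hv hw⟩
    · exact ⟨u, fun v hv => absurd ⟨v, hv⟩ h⟩
  choose σ hσ using hσ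
  refine (isPseudoforest_functionalGraph σ).anti fun u v huv => functionalGraph_adj.2 ⟨huv.ne, ?_⟩
  exact (ho.or_of_adj huv).imp (hσ u v) (hσ v u)

theorem IsPseudoforest.eq_of_not_adj_of_reachable {T H : SimpleGraph V} (hH : IsPseudoforest H)
    (hTH : T ≤ H) (hTreach : T.Reachable = H.Reachable) {a b c d : V}
    (hab : H.Adj a b) (hTab : ¬ T.Adj a b) (hcd : H.Adj c d) (hTcd : ¬ T.Adj c d)
    (hac : H.Reachable a c) : s(a, b) = s(c, d) := by
  obtain ⟨p, hp, habp, -⟩ := exists_isCycle_of_not_adj hTH hab hTab (hTreach ▸ hab.symm.reachable)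
  obtain ⟨q, hq, -, hqT⟩ := exists_isCycle_of_not_adj hTH hcd hTcd (hTreach ▸ hcd.symm.reachable)
  exact (hqT _ ((hH p q hp hq hac _).1 habp)).resolve_left hTab

theorem IsPseudoforest.exists_root {T H : SimpleGraph V} (hH : IsPseudoforest H) (hTH : T ≤ H)
    (hTreach : T.Reachable = H.Reachable) :
    ∃ root : V → V, (∀ u, H.Reachable (root u) u) ∧ (∀ u v, H.Reachable u v → root u = root v) ∧
      ∀ a b, H.Adj a b → ¬ T.Adj a b → root a = a ∨ root a = b := by
  have hroot : ∀ C : H.ConnectedComponent, ∃ r, H.connectedComponentMk r = C ∧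
      ∀ a b, H.Adj a b → ¬ T.Adj a b → H.connectedComponentMk a = C → r = a ∨ r = b := by
    intro C
    by_cases h : ∃ a b, H.Adj a b ∧ ¬ T.Adj a b ∧ H.connectedComponentMk a = C
    · obtain ⟨a, b, hab, hTab, rfl⟩ := h
      refine ⟨a, rfl, fun c d hcd hTcd hc => ?_⟩
      rcases Sym2.eq_iff.1 (hH.eq_of_not_adj_of_reachable hTH hTreach hab hTab hcd hTcd
        (ConnectedComponent.exact hc.symm)) with ⟨h, -⟩ | ⟨h, -⟩
      exacts [Or.inl h, Or.inr h]
    · obtain ⟨r, rfl⟩ := C.exists_rep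
      exact ⟨r, rfl, fun a b hab hTab ha => absurd ⟨a, b, hab, hTab, ha⟩ h⟩
  choose rootOf hrootOf using hroot
  exact ⟨fun u => rootOf (H.connectedComponentMk u),
    fun u => ConnectedComponent.exact (hrootOf _).1,
    fun u v h => congrArg rootOf (ConnectedComponent.sound h),
    fun a b hab hTab => (hrootOf _).2 a b hab hTab rfl⟩

theorem IsPseudoforest.exists_orientation {H : SimpleGraph V} (hH : IsPseudoforest H) :
    ∃ o, IsOrientation H o ∧ ∀ u, {v | o u v}.Subsingleton := by
  obtain ⟨T, hTH, hT, hTreach⟩ := H.exists_isAcyclic_reachable_eq_le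
  obtain ⟨root, hreach, hconst, hextra⟩ := hH.exists_root hTH hTreach
  obtain ⟨o, ho, hsub, hroot_out⟩ := hT.exists_orientation root (hTreach ▸ hreach)
    (fun u v h => hconst u v (hTreach ▸ h))
  refine ⟨fun u v => o u v ∨ (u = root u ∧ H.Adj u v ∧ ¬ T.Adj u v), ⟨?_, fun u v huv => ?_⟩, ?_⟩
  · rintro u v (h | ⟨-, h, -⟩)
    exacts [hTH (ho.1 u v h), h]
  · by_cases hTuv : T.Adj u v
    · simp [hTuv, hTuv.symm, ho.2 u v hTuv]
    have hnot : ¬ o u v ∧ ¬ o v u := ⟨fun h => hTuv (ho.1 _ _ h), fun h => hTuv (ho.1 _ _ h).symm⟩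
    simp only [hconst v u huv.symm.reachable, hnot.1, hnot.2, false_or, huv, huv.symm, hTuv,
      mt T.adj_symm hTuv, not_false_eq_true, and_true]
    rcases hextra u v huv hTuv with h | h <;> rw [h] <;> simp [huv.ne, huv.ne.symm]
  · rintro u v (hv | ⟨hu, huv, hTuv⟩) w (hw | ⟨hu', huw, hTuw⟩)
    · exact hsub u hv hw
    · exact absurd hv (hroot_out u v hu')
    · exact absurd hw (hroot_out u w hu)
    · exact Sym2.congr_right.1
        (hH.eq_of_not_adj_of_reachable hTH hTreach huv hTuv huw hTuw (.refl u))

theorem IsDecomposition.existsUnique_adj {G : SimpleGraph V} {n : ℕ}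
    {H : Fin n → SimpleGraph V} (hH : IsDecomposition G H) {u v : V} (huv : G.Adj u v) :
    ∃! i, (H i).Adj u v := by
  obtain ⟨i, hi⟩ := Set.mem_iUnion.1 (hH.2.2 ▸ huv : s(u, v) ∈ ⋃ i, (H i).edgeSet)
  exact ⟨i, hi, fun j hj => by_contra fun hji => Set.disjoint_left.1 (hH.2.1 hji) hj hi⟩

theorem IsDecomposition.exists_orientation {G : SimpleGraph V} {k : ℕ}
    {H : Fin k → SimpleGraph V} (hH : IsDecomposition G H) (hpf : ∀ i, IsPseudoforest (H i)) :
    ∃ o, IsOrientation G o ∧ ∀ v, outDeg o v ≤ k := by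
  choose o ho hsub using fun i => (hpf i).exists_orientation
  refine ⟨fun u v => ∃ i, o i u v, ⟨fun u v ⟨i, h⟩ => hH.1 i ((ho i).1 u v h), fun u v huv => ?_⟩,
    fun v => ?_⟩
  · obtain ⟨i, hi, huniq⟩ := hH.existsUnique_adj huv
    have hpart : ∀ {x y}, (∀ j, (H j).Adj x y → j = i) → ((∃ j, o j x y) ↔ o i x y) :=
      fun h => ⟨fun ⟨j, hj⟩ => h j ((ho j).1 _ _ hj) ▸ hj, fun h => ⟨i, h⟩⟩
    show (∃ j, o j u v) ↔ ¬ ∃ j, o j v u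
    rw [hpart huniq, hpart fun j hj => huniq j hj.symm]
    exact (ho i).2 u v hi
  · calc outDeg (fun u v => ∃ i, o i u v) v = (⋃ i, {u | o i v u}).ncard := by
          rw [outDeg, Set.ofPred_exists]
      _ ≤ ∑ i : Fin k, {u | o i v u}.ncard := Set.ncard_iUnion_le_of_fintype _
      _ ≤ ∑ _i : Fin k, 1 := Finset.sum_le_sum fun i _ =>
          have := (hsub i v).finite.to_subtype
          Set.ncard_le_one_iff_subsingleton.2 (hsub i v)
      _ = k := by simp

theorem IsOrientation.exists_decomposition [Finite V] {G : SimpleGraph V}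
    {o : V → V → Prop} {k : ℕ} (ho : IsOrientation G o) (hdeg : ∀ v, outDeg o v ≤ k) :
    ∃ H : Fin k → SimpleGraph V, IsDecomposition G H ∧ ∀ i, IsPseudoforest (H i) := by
  have hlabel : ∀ v, Nonempty ({u | o v u} ↪ Fin k) := fun v => by
    have := Fintype.ofFinite {u | o v u}
    refine Function.Embedding.nonempty_of_card_le ?_
    simpa [← Nat.card_eq_fintype_card, Nat.card_coe_set_eq, outDeg, Nat.card_fin] using hdeg v
  let g v := (hlabel v).some
  let r (i : Fin k) (u v : V) : Prop := ∃ h : o u v, g u ⟨v, h⟩ = i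
  have hr_adj : ∀ {i u v}, (fromRel (r i)).Adj u v ↔ r i u v ∨ r i v u := fun {i u v} =>
    fromRel_adj _ _ _ |>.trans <| and_iff_right_of_imp <| by
      rintro (⟨h, -⟩ | ⟨h, -⟩)
      exacts [(ho.1 _ _ h).ne, (ho.1 _ _ h).ne.symm]
  have hle : ∀ i, fromRel (r i) ≤ G := fun i u v huv => by
    rcases hr_adj.1 huv with ⟨h, -⟩ | ⟨h, -⟩
    exacts [ho.1 _ _ h, (ho.1 _ _ h).symm]
  refine ⟨fun i => fromRel (r i), ⟨hle, fun i j hij => ?_, ?_⟩, fun i => ?_⟩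
  · refine Set.disjoint_left.2 fun e hi hj => ?_
    induction e using Sym2.ind with
    | _ x y =>
      rcases hr_adj.1 hi with ⟨hxy, rfl⟩ | ⟨hyx, rfl⟩ <;>
        rcases hr_adj.1 hj with ⟨hxy', rfl⟩ | ⟨hyx', rfl⟩
      exacts [hij rfl, ho.asymm hxy hyx', ho.asymm hxy' hyx, hij rfl]
  · refine (Set.iUnion_subset fun i => edgeSet_mono (hle i)).antisymm fun e he => ?_
    induction e using Sym2.ind with
    | _ x y =>
      rcases ho.or_of_adj he with hxy | hyx
      · exact Set.mem_iUnion.2 ⟨g x ⟨y, hxy⟩, hr_adj.2 (Or.inl ⟨hxy, rfl⟩)⟩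
      · exact Set.mem_iUnion.2 ⟨g y ⟨x, hyx⟩, hr_adj.2 (Or.inr ⟨hyx, rfl⟩)⟩
  · refine IsOrientation.isPseudoforest (o := r i) ⟨fun u v h => hr_adj.2 (Or.inl h),
      fun u v huv => ⟨fun h h' => ho.asymm h.1 h'.1, fun h => (hr_adj.1 huv).resolve_right h⟩⟩ ?_
    rintro u v ⟨hv, rfl⟩ w ⟨hw, hvw⟩
    simpa using ((g u).injective hvw).symm

end

/-- A graph `G` decomposes into `k` pseudoforests if and only if `G` admits an
orientation in which every vertex has outdegree at most `k`. -/
theorem pseudoforest_decomposition_iff_orientation (k : ℕ)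
    {V : Type*} [Fintype V] (G : SimpleGraph V) :
    (∃ H : Fin k → SimpleGraph V,
        IsDecomposition G H ∧ ∀ i, IsPseudoforest (H i)) ↔
      ∃ o : V → V → Prop, IsOrientation G o ∧ ∀ v, outDeg o v ≤ k :=
  ⟨fun ⟨_, hH, hpf⟩ => hH.exists_orientation hpf, fun ⟨_, ho, hdeg⟩ => ho.exists_decomposition hdeg⟩
end

section
/- Fix positive integers $k$ and $d$. Let $G$ be an oriented graph in which every vertex has outdegree $k$ or $k+1$, equipped with a red-blue colouring: at every vertex, exactly $k$ outgoing arcs are blue and the remaining outgoing arc, if any, is red. Let $(x,y)$ be a blue arc, suppose the red component $R^y$ containing $y$ is acyclic, and let $e = xv$ be a red edge incident to $x$. Perform the exchange of $e$ and $(x,y)$: reverse the unique maximal directed red path in $R^y$ starting at $y$; recolour $(x,y)$ red and reorient it to $(y,x)$; recolour $e$ blue and orient it from $x$ to $v$. Then in the resulting oriented coloured graph, every vertex again has outdegree $k$ or $k+1$, and the colouring is again a red-blue colouring: every vertex has exactly $k$ outgoing blue arcs and at most one outgoing red arc. -/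
open SimpleGraph
open scoped Classical

/-- The number of outgoing blue arcs at `w` (arcs whose edge is not in `Red`). -/
noncomputable def blueOutDeg {V : Type*} (o : V → V → Prop) (Red : Set (Sym2 V))
    (w : V) : ℕ :=
  {u | o w u ∧ s(w, u) ∉ Red}.ncard

/-- The number of outgoing red arcs at `w` (arcs whose edge is in `Red`). -/
noncomputable def redOutDeg {V : Type*} (o : V → V → Prop) (Red : Set (Sym2 V))
    (w : V) : ℕ :=
  {u | o w u ∧ s(w, u) ∈ Red}.ncard

/-- The graph formed by the red edges. -/
def redGraph {V : Type*} (G : SimpleGraph V) (Red : Set (Sym2 V)) : SimpleGraph V where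
  Adj a b := G.Adj a b ∧ s(a, b) ∈ Red
  symm := by
    constructor
    intro a b hab
    exact ⟨hab.1.symm, by rw [Sym2.eq_swap]; exact hab.2⟩
  loopless := ⟨fun a h => h.1.ne rfl⟩

/-- The edges of a path given as a list of vertices. -/
def pathEdges {V : Type*} (l : List V) : Set (Sym2 V) :=
  {e | ∃ p ∈ l.zip l.tail, e = s(p.1, p.2)}

/-- The orientation resulting from exchanging the red edge `xv` and the blue arc
`(x,y)`, after reversing the maximal directed red path `l` starting at `y`:
the arcs along `l` are reversed, the edge `xy` is oriented from `y` to `x`, and the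
edge `xv` is oriented from `x` to `v`. -/
def exchOrient {V : Type*} (o : V → V → Prop) (x y v : V) (l : List V) :
    V → V → Prop :=
  fun a b =>
    if s(a, b) = s(x, y) then a = y ∧ b = x
    else if s(a, b) = s(x, v) then a = x ∧ b = v
    else if s(a, b) ∈ pathEdges l then o b a
    else o a b

/-- The red edge set resulting from the exchange: `xv` becomes blue and `xy`
becomes red. -/
def exchRed {V : Type*} (Red : Set (Sym2 V)) (x y v : V) : Set (Sym2 V) :=
  (Red \ {s(x, v)}) ∪ {s(x, y)}

/-! The exchange changes blue arcs only at `x`, which trades its blue arc to `y` for a blue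
arc to `v`; so every blue outdegree is unchanged. On the red side, `y` trades its red out-arc
along the path (if it is not the last vertex) for the red arc to `x`, and every other vertex
of the reversed path trades its red out-arc along the path (or, at the end of the maximal path,
nothing) for the reversed arc to its predecessor, which is unique because the path has no
repeated vertices. Off the path, red arcs only disappear. So at most one red arc leaves each
vertex, and the outdegree, blue plus red, is `k` or `k + 1`. -/

namespace List
variable {α : Type*} {l : List α} {a b c : α}

theorem mem_zip_tail_iff :
    (a, b) ∈ l.zip l.tail ↔
      ∃ (i : ℕ) (_ : i + 1 < l.length), l[i] = a ∧ l[i + 1] = b := by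
  simp only [mem_iff_getElem, getElem_zip, getElem_tail, length_zip, length_tail, Prod.mk.injEq]
  constructor
  · rintro ⟨i, hi, h⟩; exact ⟨i, by omega, h⟩
  · rintro ⟨i, hi, h⟩; exact ⟨i, by omega, h⟩

theorem rel_of_mem_zip_tail {R : α → α → Prop} (h : l.IsChain R)
    (hab : (a, b) ∈ l.zip l.tail) : R a b := by
  obtain ⟨i, hi, rfl, rfl⟩ := mem_zip_tail_iff.mp hab
  exact h.getElem i hi

theorem Nodup.eq_of_mem_zip_tail (h : l.Nodup) (hac : (a, c) ∈ l.zip l.tail)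
    (hbc : (b, c) ∈ l.zip l.tail) : a = b := by
  obtain ⟨i, hi, rfl, rfl⟩ := mem_zip_tail_iff.mp hac
  obtain ⟨j, hj, rfl, hij⟩ := mem_zip_tail_iff.mp hbc
  obtain rfl : j = i := by simpa using h.getElem_inj_iff.mp hij
  rfl

theorem exists_mem_zip_tail_of_ne_getLast (hl : l ≠ []) (ha : a ∈ l)
    (hlast : a ≠ l.getLast hl) : ∃ b, (a, b) ∈ l.zip l.tail := by
  obtain ⟨i, hi, rfl⟩ := mem_iff_getElem.mp ha
  have hi' : i + 1 < l.length := by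
    by_contra h
    exact hlast (by rw [getLast_eq_getElem]; congr; omega)
  exact ⟨l[i + 1], mem_zip_tail_iff.mpr ⟨i, hi', rfl, rfl⟩⟩

theorem Nodup.head_notMem_tail (h : l.Nodup) (hl : l ≠ []) : l.head hl ∉ l.tail := by
  rw [← cons_head_tail hl] at h
  exact (nodup_cons.mp h).1

end List

section Degrees
variable {V : Type*} [Finite V] (o : V → V → Prop) (Red : Set (Sym2 V))

theorem outDeg_eq_blueOutDeg_add_redOutDeg (w : V) :
    outDeg o w = blueOutDeg o Red w + redOutDeg o Red w := by
  rw [outDeg, blueOutDeg, redOutDeg, ← Set.ncard_union_eq]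
  · congr 1; ext u; simp only [Set.mem_union, Set.mem_ofPred_eq]; tauto
  · exact Set.disjoint_left.mpr fun u hb hr => hb.2 hr.2

theorem outDeg_eq_or_eq_add_one_iff {k : ℕ} {w : V} (hblue : blueOutDeg o Red w = k) :
    (outDeg o w = k ∨ outDeg o w = k + 1) ↔ redOutDeg o Red w ≤ 1 := by
  rw [outDeg_eq_blueOutDeg_add_redOutDeg o Red, hblue]
  omega

end Degrees

namespace IsOrientation
variable {V : Type*} {G : SimpleGraph V} {o : V → V → Prop} {a b c d : V}

theorem asymm_s9 (ho : IsOrientation G o) (hab : o a b) : ¬ o b a :=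
  (ho.2 a b (ho.1 a b hab)).mp hab

theorem eq_of_sym2_eq (ho : IsOrientation G o) (hab : o a b) (hcd : o c d)
    (h : s(a, b) = s(c, d)) : a = c ∧ b = d := by
  rcases Sym2.eq_iff.mp h with h | ⟨rfl, rfl⟩
  · exact h
  · exact absurd hab (ho.asymm_s9 hcd)

end IsOrientation

section Exchange
variable {V : Type*} {G : SimpleGraph V} {o : V → V → Prop} {Red : Set (Sym2 V)}
  {x y v : V} {l : List V}

theorem isOrientation_exchOrient (ho : IsOrientation G o) (hxy : G.Adj x y) (hxv : G.Adj x v)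
    (l : List V) : IsOrientation G (exchOrient o x y v l) := by
  refine ⟨fun a b hab => ?_, fun a b hab => ?_⟩
  · unfold exchOrient at hab
    split_ifs at hab
    · obtain ⟨rfl, rfl⟩ := hab; exact hxy.symm
    · obtain ⟨rfl, rfl⟩ := hab; exact hxv
    · exact (ho.1 b a hab).symm
    · exact ho.1 a b hab
  · simp only [exchOrient, Sym2.eq_swap (a := b)]
    split_ifs with h₁ h₂
    · rcases Sym2.eq_iff.mp h₁ with ⟨rfl, rfl⟩ | ⟨rfl, rfl⟩ <;>
        simp [hxy.ne, hxy.ne.symm]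
    · rcases Sym2.eq_iff.mp h₂ with ⟨rfl, rfl⟩ | ⟨rfl, rfl⟩ <;>
        simp [hxv.ne, hxv.ne.symm]
    · exact ho.2 b a hab.symm
    · exact ho.2 a b hab

theorem exchOrient_red_cases {w u : V}
    (h : exchOrient o x y v l w u ∧ s(w, u) ∈ exchRed Red x y v) :
    (w = y ∧ u = x) ∨ (s(w, u) ∈ pathEdges l ∧ o u w) ∨
      (o w u ∧ s(w, u) ∈ Red ∧ s(w, u) ∉ pathEdges l) := by
  obtain ⟨ho, hr⟩ := h
  simp only [exchRed, Set.mem_union, Set.mem_sdiff, Set.mem_singleton_iff] at hr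
  unfold exchOrient at ho
  split_ifs at ho with h₁ h₂ h₃
  · exact .inl ho
  · obtain ⟨rfl, rfl⟩ := ho; tauto
  · exact .inr (.inl ⟨h₃, ho⟩)
  · tauto

theorem exchOrient_blue_iff (ho : IsOrientation G o) (hxy : o x y) (hxyblue : s(x, y) ∉ Red)
    (hxvred : s(x, v) ∈ Red) (hpath : pathEdges l ⊆ Red) {w u : V} :
    exchOrient o x y v l w u ∧ s(w, u) ∉ exchRed Red x y v ↔
      (w = x ∧ u = v) ∨ (o w u ∧ s(w, u) ∉ Red ∧ ¬ (w = x ∧ u = y)) := by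
  simp only [exchOrient, exchRed, Set.mem_union, Set.mem_sdiff, Set.mem_singleton_iff]
  split_ifs with h₁ h₂ h₃
  · have : ¬ (o w u ∧ ¬(w = x ∧ u = y)) := fun h => h.2 (ho.eq_of_sym2_eq h.1 hxy h₁)
    grind
  · grind
  · have := hpath h₃
    grind
  · grind

theorem pathEdges_subset (hchain : l.IsChain fun a b => o a b ∧ s(a, b) ∈ Red) :
    pathEdges l ⊆ Red := by
  rintro _ ⟨⟨a, b⟩, hab, rfl⟩
  exact (List.rel_of_mem_zip_tail hchain hab).2

theorem mem_zip_tail_of_mem_pathEdges (ho : IsOrientation G o)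
    (hchain : l.IsChain fun a b => o a b ∧ s(a, b) ∈ Red) {w u : V}
    (he : s(w, u) ∈ pathEdges l) (huw : o u w) : (u, w) ∈ l.zip l.tail := by
  obtain ⟨⟨a, b⟩, hab, he⟩ := he
  obtain ⟨rfl, rfl⟩ :=
    ho.eq_of_sym2_eq huw (List.rel_of_mem_zip_tail hchain hab).1 (Sym2.eq_swap.trans he)
  exact hab

theorem mem_pathEdges_of_red_arc (hl : l ≠ [])
    (hchain : l.IsChain fun a b => o a b ∧ s(a, b) ∈ Red)
    (hmaximal : ∀ u, ¬ (o (l.getLast hl) u ∧ s(l.getLast hl, u) ∈ Red))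
    (hred : ∀ w, {u | o w u ∧ s(w, u) ∈ Red}.Subsingleton) {w u : V} (hw : w ∈ l)
    (hwu : o w u ∧ s(w, u) ∈ Red) : s(w, u) ∈ pathEdges l := by
  have hlast : w ≠ l.getLast hl := by
    rintro rfl
    exact hmaximal u hwu
  obtain ⟨b, hb⟩ := List.exists_mem_zip_tail_of_ne_getLast hl hw hlast
  have hwb := List.rel_of_mem_zip_tail hchain hb
  exact ⟨(w, u), hred w hwu hwb ▸ hb, rfl⟩

theorem blueOutDeg_exch [Finite V] (ho : IsOrientation G o) (hxy : o x y)
    (hxyblue : s(x, y) ∉ Red) (hxvred : s(x, v) ∈ Red) (hpath : pathEdges l ⊆ Red) (w : V) :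
    blueOutDeg (exchOrient o x y v l) (exchRed Red x y v) w = blueOutDeg o Red w := by
  unfold blueOutDeg
  simp_rw [exchOrient_blue_iff ho hxy hxyblue hxvred hpath]
  by_cases hw : w = x
  · subst hw
    have hy : y ∈ {u | o w u ∧ s(w, u) ∉ Red} := ⟨hxy, hxyblue⟩
    have hset : {u | (w = w ∧ u = v) ∨ (o w u ∧ s(w, u) ∉ Red ∧ ¬(w = w ∧ u = y))} =
        insert v ({u | o w u ∧ s(w, u) ∉ Red} \ {y}) := by
      ext u
      simp only [Set.mem_ofPred_eq, Set.mem_insert_iff, Set.mem_sdiff, Set.mem_singleton_iff]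
      tauto
    rw [hset, Set.ncard_insert_of_notMem (fun h => h.1.2 hxvred),
      Set.ncard_sdiff_singleton_add_one hy]
  · simp [hw]

theorem redOutDeg_exch_le_one [Finite V] (ho : IsOrientation G o) (hl : l ≠ [])
    (hhead : l.head hl = y) (hchain : l.IsChain fun a b => o a b ∧ s(a, b) ∈ Red)
    (hnodup : l.Nodup) (hmaximal : ∀ u, ¬ (o (l.getLast hl) u ∧ s(l.getLast hl, u) ∈ Red))
    (hred : ∀ w, {u | o w u ∧ s(w, u) ∈ Red}.Subsingleton) (w : V) :
    redOutDeg (exchOrient o x y v l) (exchRed Red x y v) w ≤ 1 := by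
  rw [redOutDeg, Set.ncard_le_one_iff_subsingleton]
  have hy : y ∈ l := hhead ▸ List.head_mem hl
  have hy' : y ∉ l.tail := hhead ▸ hnodup.head_notMem_tail hl
  by_cases hwy : w = y
  · subst hwy
    refine (Set.subsingleton_singleton (a := x)).anti fun u hu => ?_
    rcases exchOrient_red_cases hu with ⟨-, rfl⟩ | ⟨he, huw⟩ | ⟨hwu, hr, hnp⟩
    · rfl
    · exact absurd (List.of_mem_zip (mem_zip_tail_of_mem_pathEdges ho hchain he huw)).2 hy'
    · exact absurd (mem_pathEdges_of_red_arc hl hchain hmaximal hred hy ⟨hwu, hr⟩) hnp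
  by_cases hwl : w ∈ l
  · have hpred : {u | (u, w) ∈ l.zip l.tail}.Subsingleton :=
      fun a ha b hb => hnodup.eq_of_mem_zip_tail ha hb
    refine hpred.anti fun u hu => ?_
    rcases exchOrient_red_cases hu with ⟨rfl, -⟩ | ⟨he, huw⟩ | ⟨hwu, hr, hnp⟩
    · exact absurd rfl hwy
    · exact mem_zip_tail_of_mem_pathEdges ho hchain he huw
    · exact absurd (mem_pathEdges_of_red_arc hl hchain hmaximal hred hwl ⟨hwu, hr⟩) hnp
  · refine (hred w).anti fun u hu => ?_
    rcases exchOrient_red_cases hu with ⟨rfl, -⟩ | ⟨he, huw⟩ | ⟨hwu, hr, -⟩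
    · exact absurd hy hwl
    · have := (List.of_mem_zip (mem_zip_tail_of_mem_pathEdges ho hchain he huw)).2
      exact absurd (List.mem_of_mem_tail this) hwl
    · exact ⟨hwu, hr⟩

end Exchange

theorem exchange_preserves_red_blue_general (k : ℕ)
    {V : Type*} [Fintype V] (G : SimpleGraph V)
    (o : V → V → Prop) (horient : IsOrientation G o)
    (houtdeg : ∀ w : V, outDeg o w = k ∨ outDeg o w = k + 1)
    (Red : Set (Sym2 V))
    (hblue : ∀ w : V, blueOutDeg o Red w = k)
    (x y v : V)
    (hxy : o x y) (hxyblue : s(x, y) ∉ Red)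
    (hxv : G.Adj x v) (hxvred : s(x, v) ∈ Red)
    (l : List V) (hl : l ≠ []) (hhead : l.head hl = y)
    (hchain : l.Chain' fun a b => o a b ∧ s(a, b) ∈ Red)
    (hnodup : l.Nodup)
    (hmaximal : ∀ u : V, ¬ (o (l.getLast hl) u ∧ s(l.getLast hl, u) ∈ Red)) :
    IsOrientation G (exchOrient o x y v l) ∧
      (∀ w : V, outDeg (exchOrient o x y v l) w = k ∨
        outDeg (exchOrient o x y v l) w = k + 1) ∧
      (∀ w : V, blueOutDeg (exchOrient o x y v l) (exchRed Red x y v) w = k) ∧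
      (∀ w : V, redOutDeg (exchOrient o x y v l) (exchRed Red x y v) w ≤ 1) := by
  have hred : ∀ w, {u | o w u ∧ s(w, u) ∈ Red}.Subsingleton := fun w =>
    Set.ncard_le_one_iff_subsingleton.mp
      ((outDeg_eq_or_eq_add_one_iff o Red (hblue w)).mp (houtdeg w))
  have hblue' : ∀ w, blueOutDeg (exchOrient o x y v l) (exchRed Red x y v) w = k := fun w =>
    (blueOutDeg_exch horient hxy hxyblue hxvred (pathEdges_subset hchain) w).trans (hblue w)
  have hred' : ∀ w, redOutDeg (exchOrient o x y v l) (exchRed Red x y v) w ≤ 1 :=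
    redOutDeg_exch_le_one horient hl hhead hchain hnodup hmaximal hred
  exact ⟨isOrientation_exchOrient horient (horient.1 x y hxy) hxv l,
    fun w => (outDeg_eq_or_eq_add_one_iff _ _ (hblue' w)).mpr (hred' w), hblue', hred'⟩

/-- Exchanging a red edge `e = xv` and a blue arc `(x,y)` (whose red component `Rʸ`
is acyclic) preserves the properties of the orientation and of the red-blue
colouring: afterwards every vertex again has outdegree `k` or `k+1`, exactly `k`
outgoing blue arcs, and at most one outgoing red arc. -/
theorem exchange_preserves_red_blue (k d : ℕ) (hk : 0 < k) (hd : 0 < d)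
    {V : Type*} [Fintype V] (G : SimpleGraph V)
    (o : V → V → Prop) (horient : IsOrientation G o)
    (houtdeg : ∀ w : V, outDeg o w = k ∨ outDeg o w = k + 1)
    (Red : Set (Sym2 V)) (hRed : Red ⊆ G.edgeSet)
    (hblue : ∀ w : V, blueOutDeg o Red w = k)
    (x y v : V)
    (hxy : o x y) (hxyblue : s(x, y) ∉ Red)
    (hacyc : ∀ w : V, (redGraph G Red).Reachable y w →
      ∀ p : (redGraph G Red).Walk w w, ¬ p.IsCycle)
    (hxv : G.Adj x v) (hxvred : s(x, v) ∈ Red)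
    (l : List V) (hl : l ≠ []) (hhead : l.head hl = y)
    (hchain : l.Chain' fun a b => o a b ∧ s(a, b) ∈ Red)
    (hnodup : l.Nodup)
    (hmaximal : ∀ u : V, ¬ (o (l.getLast hl) u ∧ s(l.getLast hl, u) ∈ Red)) :
    IsOrientation G (exchOrient o x y v l) ∧
      (∀ w : V, outDeg (exchOrient o x y v l) w = k ∨
        outDeg (exchOrient o x y v l) w = k + 1) ∧
      (∀ w : V, blueOutDeg (exchOrient o x y v l) (exchRed Red x y v) w = k) ∧
      (∀ w : V, redOutDeg (exchOrient o x y v l) (exchRed Red x y v) w ≤ 1) :=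
  exchange_preserves_red_blue_general k G o horient houtdeg Red hblue x y v hxy hxyblue hxv hxvred l
    hl hhead hchain hnodup hmaximal
end
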